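/- arXiv:1312.2752 — 2 statements merged into one kernel-verified Lean document; each statement's English description precedes it below -/
import Mathlib

section
/- The symmetrization of a circulant B₀ tensor is a circulant B₀ tensor, and the symmetrization of a circulant B tensor is a circulant B tensor. -/
open BigOperators

/-- The symmetrization of a tensor: the average of its entries over all permutations of
the indices. -/
noncomputable def symT {m n : ℕ} (A : (Fin m → Fin n) → ℝ) : (Fin m → Fin n) → ℝ :=
  fun j => (∑ σ : Equiv.Perm (Fin m), A (j ∘ σ)) / (Nat.factorial m : ℝ)

/-- `A` (order `m+1`) is a B₀ tensor: each row sum is nonnegative, and the average entry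
of each row is at least any off-diagonal entry of that row. -/
def IsB0 {m n : ℕ} (A : (Fin (m + 1) → Fin n) → ℝ) : Prop :=
  ∀ j : Fin n,
    0 ≤ (∑ t : Fin m → Fin n, A (Fin.cons j t)) ∧
    ∀ k : Fin m → Fin n, ¬(∀ l, k l = j) →
      A (Fin.cons j k) ≤ (∑ t : Fin m → Fin n, A (Fin.cons j t)) / (n : ℝ) ^ m

/-- `A` (order `m+1`) is a B tensor: strict versions of the B₀ inequalities. -/
def IsB {m n : ℕ} (A : (Fin (m + 1) → Fin n) → ℝ) : Prop :=
  ∀ j : Fin n,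
    0 < (∑ t : Fin m → Fin n, A (Fin.cons j t)) ∧
    ∀ k : Fin m → Fin n, ¬(∀ l, k l = j) →
      A (Fin.cons j k) < (∑ t : Fin m → Fin n, A (Fin.cons j t)) / (n : ℝ) ^ m

/-!
Translating all indices of a circulant tensor by a common `d` leaves its entries unchanged, so
all row sums coincide and equal the total sum divided by `n`. Hence, for circulant tensors, the
B₀ (resp. B) conditions say only that the total sum is nonnegative (resp. positive) and bounds
`n ^ (m + 1)` times every off-diagonal entry. Symmetrization preserves circulance and the total
sum, and each off-diagonal entry of `symT A` is an average of off-diagonal entries of `A`.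
-/

open Finset

theorem Fin.exists_cons_apply_ne_iff {α : Type*} {m : ℕ} (j : α) (k : Fin m → α) :
    (∃ a b, (Fin.cons j k : Fin (m + 1) → α) a ≠ (Fin.cons j k : Fin (m + 1) → α) b) ↔
      ¬∀ l, k l = j := by
  refine ⟨fun ⟨a, b, hab⟩ hk => hab ?_, fun hk => ?_⟩
  · have hconst : ∀ i, (Fin.cons j k : Fin (m + 1) → α) i = j :=
      Fin.cases rfl fun l => hk l
    rw [hconst, hconst]
  · obtain ⟨l, hl⟩ := not_forall.1 hk
    exact ⟨l.succ, 0, by simpa using hl⟩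

theorem exists_comp_apply_ne {α ι : Type*} {g : ι → α} (hg : ∃ a b, g a ≠ g b)
    (σ : Equiv.Perm ι) : ∃ a b, (g ∘ σ) a ≠ (g ∘ σ) b := by
  obtain ⟨a, b, hab⟩ := hg
  exact ⟨σ.symm a, σ.symm b, by simpa using hab⟩

section Circulant

variable {m n : ℕ} [NeZero n]

def IsCirculant (A : (Fin m → Fin n) → ℝ) : Prop :=
  ∀ j : Fin m → Fin n, A j = A (fun l => j l + 1)

open Fin.NatCast in
theorem IsCirculant.apply_add {A : (Fin m → Fin n) → ℝ} (hA : IsCirculant A)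
    (j : Fin m → Fin n) (d : Fin n) : A (fun l => j l + d) = A j := by
  have key : ∀ k : ℕ, A (fun l => j l + k • 1) = A j := by
    intro k
    induction k with
    | zero => simp
    | succ k ih => simp_rw [succ_nsmul, ← add_assoc]; rw [← hA, ih]
  simpa [nsmul_one, Fin.cast_val_eq_self] using key d.val

theorem IsCirculant.sum_cons {A : (Fin (m + 1) → Fin n) → ℝ} (hA : IsCirculant A) (j : Fin n) :
    ∑ t : Fin m → Fin n, A (Fin.cons j t) = (∑ f, A f) / n := by
  have hrow : ∀ j : Fin n, ∑ t : Fin m → Fin n, A (Fin.cons j t) = ∑ t, A (Fin.cons 0 t) := by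
    intro j
    refine (Fintype.sum_equiv (Equiv.piCongrRight fun _ => Equiv.addRight j) _ _
      fun t => ?_).symm
    have hshift : (Fin.cons j (fun l => t l + j) : Fin (m + 1) → Fin n) =
        fun i => (Fin.cons 0 t : Fin (m + 1) → Fin n) i + j := by
      funext i
      cases i using Fin.cases <;> simp
    show A _ = A (Fin.cons j fun l => t l + j)
    rw [hshift, hA.apply_add]
  have htotal : ∑ f, A f = ∑ j : Fin n, ∑ t : Fin m → Fin n, A (Fin.cons j t) := by
    rw [← Fintype.sum_prod_type']
    exact (Fintype.sum_equiv (Fin.consEquiv _) _ _ fun _ => rfl).symm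
  have hn : (n : ℝ) ≠ 0 := NeZero.ne _
  rw [htotal, sum_congr rfl fun j _ => hrow j, sum_const, card_univ, Fintype.card_fin,
    nsmul_eq_mul, hrow, mul_div_cancel_left₀ _ hn]

theorem isB0_iff_of_isCirculant {A : (Fin (m + 1) → Fin n) → ℝ} (hA : IsCirculant A) :
    IsB0 A ↔ 0 ≤ ∑ f, A f ∧
      ∀ g : Fin (m + 1) → Fin n, (∃ a b, g a ≠ g b) → A g ≤ (∑ f, A f) / n ^ (m + 1) := by
  have hn : (0 : ℝ) < n := Nat.cast_pos.2 (NeZero.pos n)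
  simp only [IsB0, hA.sum_cons, div_div, ← pow_succ', le_div_iff₀ hn, zero_mul, forall_and,
    forall_const]
  simp only [Fin.forall_fin_succ_pi, Fin.exists_cons_apply_ne_iff]

theorem isB_iff_of_isCirculant {A : (Fin (m + 1) → Fin n) → ℝ} (hA : IsCirculant A) :
    IsB A ↔ 0 < ∑ f, A f ∧
      ∀ g : Fin (m + 1) → Fin n, (∃ a b, g a ≠ g b) → A g < (∑ f, A f) / n ^ (m + 1) := by
  have hn : (0 : ℝ) < n := Nat.cast_pos.2 (NeZero.pos n)
  simp only [IsB, hA.sum_cons, div_div, ← pow_succ', div_pos_iff_of_pos_right hn, forall_and,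
    forall_const]
  simp only [Fin.forall_fin_succ_pi, Fin.exists_cons_apply_ne_iff]

end Circulant

section Symmetrization

variable {m n : ℕ}

theorem symT_eq_expect (A : (Fin m → Fin n) → ℝ) (j : Fin m → Fin n) :
    symT A j = 𝔼 σ : Equiv.Perm (Fin m), A (j ∘ σ) := by
  rw [symT, Fintype.expect_eq_sum_div_card, Fintype.card_perm, Fintype.card_fin]

theorem sum_symT (A : (Fin m → Fin n) → ℝ) : ∑ j, symT A j = ∑ j, A j :=
  calc ∑ j, symT A j = 𝔼 σ : Equiv.Perm (Fin m), ∑ j, A (j ∘ σ) := by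
        simp_rw [symT_eq_expect]
        exact (expect_sum_comm _ _ _).symm
    _ = 𝔼 _σ : Equiv.Perm (Fin m), ∑ j, A j := by
        congr with σ
        exact Equiv.sum_comp (Equiv.arrowCongr σ.symm (Equiv.refl (Fin n))) A
    _ = ∑ j, A j := Fintype.expect_const _

theorem isCirculant_symT [NeZero n] {A : (Fin m → Fin n) → ℝ} (hA : IsCirculant A) :
    IsCirculant (symT A) := fun j => by
  simp only [symT]
  congr 1
  exact sum_congr rfl fun σ _ => hA (j ∘ σ)

theorem symT_le {A : (Fin m → Fin n) → ℝ} {j : Fin m → Fin n} {b : ℝ}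
    (h : ∀ σ : Equiv.Perm (Fin m), A (j ∘ σ) ≤ b) : symT A j ≤ b := by
  rw [symT_eq_expect]
  exact expect_le univ_nonempty fun σ _ => h σ

theorem symT_lt {A : (Fin m → Fin n) → ℝ} {j : Fin m → Fin n} {b : ℝ}
    (h : ∀ σ : Equiv.Perm (Fin m), A (j ∘ σ) < b) : symT A j < b := by
  rw [symT_eq_expect]
  exact expect_lt (fun σ _ => (h σ).le) ⟨1, mem_univ _, h 1⟩

end Symmetrization

/-- The symmetrization of a circulant B₀ tensor is a circulant B₀ tensor, and the
symmetrization of a circulant B tensor is a circulant B tensor. -/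
theorem stmt_12 (m n : ℕ) [NeZero n] (A : (Fin (m + 1) → Fin n) → ℝ)
    (hA : ∀ j : Fin (m + 1) → Fin n, A j = A (fun l => j l + 1)) :
    (IsB0 A → (∀ j : Fin (m + 1) → Fin n, symT A j = symT A (fun l => j l + 1)) ∧
      IsB0 (symT A)) ∧
    (IsB A → (∀ j : Fin (m + 1) → Fin n, symT A j = symT A (fun l => j l + 1)) ∧
      IsB (symT A)) := by
  have hsymA : IsCirculant (symT A) := isCirculant_symT hA
  refine ⟨fun hB0 => ⟨hsymA, ?_⟩, fun hB => ⟨hsymA, ?_⟩⟩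
  · obtain ⟨hsum, hoff⟩ := (isB0_iff_of_isCirculant hA).1 hB0
    refine (isB0_iff_of_isCirculant hsymA).2 ⟨sum_symT A ▸ hsum, fun g hg => ?_⟩
    rw [sum_symT]
    exact symT_le fun σ => hoff _ (exists_comp_apply_ne hg σ)
  · obtain ⟨hsum, hoff⟩ := (isB_iff_of_isCirculant hA).1 hB
    refine (isB_iff_of_isCirculant hsymA).2 ⟨sum_symT A ▸ hsum, fun g hg => ?_⟩
    rw [sum_symT]
    exact symT_lt fun σ => hoff _ (exists_comp_apply_ne hg σ)
end

section
/- Let m and n be even, and A ∈ C_{m,n} a circulant tensor whose associated tensor Ā_1 is negatively alternative. Then A is positive semi-definite if and only if λ_{n/2}(A) ≥ 0. -/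
/-!
Circulancy lets every index tuple be written uniquely as `Fin.cons 0 t + k` with `A` constant
along `k`, so `A x^{m+1} = ∑_t Ā(t) C_t(x)` with `C_t(x) = ∑_k x_k ∏_i x_{k + t_i}`.
At the alternating vector `C_t = n (-1)^{∑ t}`, which gives `A x^{m+1} = n λ_{n/2}(A)` there.
Conversely, AM-GM gives `|C_t(x)| ≤ ∑_k x_k^{m+1} = C_0(x)`, and since the signs of the
off-diagonal `Ā(t)` are fixed by the alternating pattern, `∑_t Ā(t) C_t(x) ≥ C_0(x) λ_{n/2}(A)`.
-/

open Finset

theorem Real.prod_le_sum_pow_card_div_card {ι : Type*} [Fintype ι] [Nonempty ι] (a : ι → ℝ)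
    (ha : ∀ i, 0 ≤ a i) :
    ∏ i, a i ≤ (∑ i, a i ^ Fintype.card ι) / Fintype.card ι := by
  have hcard : (0 : ℝ) < Fintype.card ι := by exact_mod_cast Fintype.card_pos
  have hw : ∑ _i : ι, (Fintype.card ι : ℝ)⁻¹ = 1 := by
    rw [sum_const, card_univ, nsmul_eq_mul, mul_inv_cancel₀ hcard.ne']
  have hroot : ∀ i, (a i ^ Fintype.card ι) ^ (Fintype.card ι : ℝ)⁻¹ = a i := fun i =>
    pow_rpow_inv_natCast (ha i) Fintype.card_ne_zero
  calc ∏ i, a i = ∏ i, (a i ^ Fintype.card ι) ^ (Fintype.card ι : ℝ)⁻¹ := by simp only [hroot]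
    _ ≤ ∑ i, (Fintype.card ι : ℝ)⁻¹ * a i ^ Fintype.card ι :=
      Real.geom_mean_le_arith_mean_weighted univ _ _ (fun _ _ => by positivity) hw
        (fun i _ => pow_nonneg (ha i) _)
    _ = (∑ i, a i ^ Fintype.card ι) / Fintype.card ι := by rw [← mul_sum, inv_mul_eq_div]

theorem sum_mul_nonneg_of_sign_pattern {ι : Type*} [Fintype ι] (b c s : ι → ℝ) (i₀ : ι)
    (hs : ∀ i, |s i| = 1) (hs₀ : s i₀ = 1) (hb : ∀ i ≠ i₀, b i * s i ≤ 0)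
    (hc : ∀ i, |c i| ≤ c i₀) (hbs : 0 ≤ ∑ i, b i * s i) :
    0 ≤ ∑ i, b i * c i := by
  have hterm : ∀ i, b i * s i * c i₀ ≤ b i * c i := by
    intro i
    rcases eq_or_ne i i₀ with rfl | hi
    · rw [hs₀, mul_one]
    · have hbi : b i * s i = -|b i| := by
        have h := abs_of_nonpos (hb i hi)
        rw [abs_mul, hs, mul_one] at h
        linarith
      rw [hbi, neg_mul]
      calc -(|b i| * c i₀) ≤ -(|b i| * |c i|) := by gcongr; exact hc i
        _ = -|b i * c i| := by rw [abs_mul]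
        _ ≤ b i * c i := neg_abs_le _
  calc 0 ≤ (∑ i, b i * s i) * c i₀ := mul_nonneg hbs ((abs_nonneg _).trans (hc i₀))
    _ = ∑ i, b i * s i * c i₀ := sum_mul _ _ _
    _ ≤ ∑ i, b i * c i := sum_le_sum fun i _ => hterm i

theorem Fin.neg_one_pow_val_add {n : ℕ} [NeZero n] (hn : Even n) (a b : Fin n) :
    (-1 : ℝ) ^ ((a + b : Fin n) : ℕ) = (-1) ^ (a : ℕ) * (-1) ^ (b : ℕ) := by
  have hpar : (-1 : ℝ) ^ (((a : ℕ) + b) % n) = (-1) ^ ((a : ℕ) + b) := by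
    conv_rhs => rw [← Nat.mod_add_div ((a : ℕ) + b) n, pow_add, pow_mul, hn.neg_one_pow, one_pow,
      mul_one]
  rw [Fin.val_add, hpar, pow_add]

section ShiftProdSum

variable {G ι : Type*} [AddCommGroup G] [Fintype G] [Fintype ι]

/-- Contribution of the shift orbit of the index tuple `u` to a circulant form
`∑ j, A j * ∏ l, x (j l)`. -/
def shiftProdSum (x : G → ℝ) (u : ι → G) : ℝ := ∑ k, ∏ l, x (u l + k)

theorem shiftProdSum_zero (x : G → ℝ) :
    shiftProdSum x (0 : ι → G) = ∑ k, x k ^ Fintype.card ι := by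
  simp [shiftProdSum]

theorem abs_shiftProdSum_le [Nonempty ι] (hι : Even (Fintype.card ι)) (x : G → ℝ) (u : ι → G) :
    |shiftProdSum x u| ≤ ∑ k, x k ^ Fintype.card ι := by
  have hcard : (0 : ℝ) < Fintype.card ι := by exact_mod_cast Fintype.card_pos
  have horbit : ∀ l, ∑ k, x (u l + k) ^ Fintype.card ι = ∑ k, x k ^ Fintype.card ι := fun l =>
    Fintype.sum_equiv (Equiv.addLeft (u l)) _ _ fun _ => rfl
  calc |shiftProdSum x u| ≤ ∑ k, ∏ l, |x (u l + k)| := by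
        simpa only [shiftProdSum, abs_prod] using
          abs_sum_le_sum_abs (fun k => ∏ l, x (u l + k)) univ
    _ ≤ ∑ k, (∑ l, x (u l + k) ^ Fintype.card ι) / Fintype.card ι := by
        gcongr with k
        simpa only [hι.pow_abs] using
          Real.prod_le_sum_pow_card_div_card (fun l => |x (u l + k)|) fun _ => abs_nonneg _
    _ = ∑ k, x k ^ Fintype.card ι := by
        rw [← sum_div, sum_comm, sum_congr rfl fun l _ => horbit l, sum_const, card_univ,
          nsmul_eq_mul, mul_div_cancel_left₀ _ hcard.ne']

theorem shiftProdSum_neg_one_pow {n : ℕ} [NeZero n] (hn : Even n)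
    (hι : Even (Fintype.card ι)) (u : ι → Fin n) :
    shiftProdSum (fun i : Fin n => (-1 : ℝ) ^ (i : ℕ)) u = n * (-1) ^ ∑ l, (u l : ℕ) := by
  have hterm : ∀ k : Fin n, ∏ l, (-1 : ℝ) ^ ((u l + k : Fin n) : ℕ) = (-1) ^ ∑ l, (u l : ℕ) := by
    intro k
    simp_rw [Fin.neg_one_pow_val_add hn, prod_mul_distrib, prod_pow_eq_pow_sum, sum_const,
      card_univ, smul_eq_mul, (hι.mul_right _).neg_one_pow, mul_one]
  simp [shiftProdSum, hterm]

end ShiftProdSum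

def consAddEquiv (G : Type*) [AddCommGroup G] (m : ℕ) :
    (Fin m → G) × G ≃ (Fin (m + 1) → G) where
  toFun p := fun l => (Fin.cons (0 : G) p.1 : Fin (m + 1) → G) l + p.2
  invFun j := (fun i => j i.succ - j 0, j 0)
  left_inv := by
    rintro ⟨t, k⟩
    simp
  right_inv := by
    intro j
    funext l
    cases l using Fin.cases <;> simp

open Fin.NatCast in
theorem add_const_invariant_of_add_one {α ι : Type*} {n : ℕ} [NeZero n] {A : (ι → Fin n) → α}
    (hA : ∀ j, A j = A (fun l => j l + 1)) (c : Fin n) (j : ι → Fin n) :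
    A (fun l => j l + c) = A j := by
  have hnat : ∀ r : ℕ, ∀ j, A (fun l => j l + (r : Fin n)) = A j := by
    intro r
    induction r with
    | zero => simp
    | succ r ih =>
      intro j
      simp_rw [Nat.cast_succ, ← add_assoc]
      rw [← hA (fun l => j l + r), ih]
  simpa only [Fin.cast_val_eq_self] using hnat c j

theorem sum_mul_prod_eq_sum_mul_shiftProdSum {G : Type*} [AddCommGroup G] [Fintype G] (m : ℕ)
    (A : (Fin (m + 1) → G) → ℝ) (hA : ∀ c j, A (fun l => j l + c) = A j) (x : G → ℝ) :
    ∑ j, A j * ∏ l, x (j l) =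
      ∑ t, A (Fin.cons 0 t) * shiftProdSum x (Fin.cons 0 t : Fin (m + 1) → G) := by
  rw [← (consAddEquiv G m).sum_comp, Fintype.sum_prod_type]
  refine sum_congr rfl fun t _ => ?_
  simp only [consAddEquiv, Equiv.coe_fn_mk, hA, shiftProdSum, mul_sum]

/-- Let the order `m+1` and dimension `n` be even, and `A ∈ C_{m+1,n}` a circulant tensor
whose associated tensor `Ā₁` is negatively alternative. Then `A` is positive
semi-definite iff `λ_{n/2}(A) ≥ 0`. -/
theorem stmt_16 (m n : ℕ) [NeZero n] (hm : Even (m + 1)) (hn : Even n)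
    (A : (Fin (m + 1) → Fin n) → ℝ)
    (hA : ∀ j : Fin (m + 1) → Fin n, A j = A (fun l => j l + 1))
    (hassoc : ∀ t : Fin m → Fin n, t ≠ (fun _ => 0) →
      A (Fin.cons 0 t) * (-1 : ℝ) ^ (∑ l, (t l : ℕ)) ≤ 0) :
    (∀ x : Fin n → ℝ, 0 ≤ ∑ j : Fin (m + 1) → Fin n, A j * ∏ l, x (j l)) ↔
      0 ≤ ∑ t : Fin m → Fin n, A (Fin.cons 0 t) * (-1 : ℝ) ^ (∑ l, (t l : ℕ)) := by
  rw [← Fintype.card_fin (m + 1)] at hm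
  simp_rw [sum_mul_prod_eq_sum_mul_shiftProdSum m A (add_const_invariant_of_add_one hA)]
  constructor
  · intro hpsd
    have halt := hpsd fun i => (-1 : ℝ) ^ (i : ℕ)
    simp_rw [shiftProdSum_neg_one_pow hn hm, Fin.sum_univ_succ, Fin.cons_zero, Fin.cons_succ,
      Fin.val_zero, zero_add, mul_left_comm _ (n : ℝ), ← mul_sum] at halt
    exact nonneg_of_mul_nonneg_right halt (by exact_mod_cast Nat.pos_of_neZero n)
  · intro hlam x
    refine sum_mul_nonneg_of_sign_pattern _ _ _ (fun _ => 0) (fun _ => abs_neg_one_pow _)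
      (by simp) hassoc (fun t => ?_) hlam
    rw [show (Fin.cons 0 fun _ => 0 : Fin (m + 1) → Fin n) = 0 from Matrix.cons_zero_zero,
      shiftProdSum_zero]
    exact abs_shiftProdSum_le hm x _
end
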